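/- Let G and A be additive abelian groups, let f : G → A satisfy the cube relation, let ℓ be an odd prime and n ≥ 1 a natural number. If x ∈ G satisfies ℓⁿ • f(x) = 0 and ℓⁿ • f(−x) = 0, then f(ℓⁿ • x) = 0. (This is the abstract core of Corollary 5.3 for ℓ ≠ 2: for a 1-motive M satisfying the generalized Theorem of the Cube for ℓ, the ℓⁿ-torsion of H²_ét(M, G_m) is contained in the kernel of the pullback (ℓⁿ_M)* along the multiplication-by-ℓⁿ map of the Picard stack M.) -/

import Mathlib

/-!
Along the line `m ↦ m • x` the cube relation at `(m • x, x, -x)` makes the second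
difference of `f` constant, equal to `f x + f (-x)`; hence
`f (m • x) = (m + 1).choose 2 • f x + m.choose 2 • f (-x)`. For odd `N` both `N.choose 2` and
`(N + 1).choose 2` are multiples of `N`, so `f (N • x)` is killed as soon as `N` kills `f x`
and `f (-x)`.
-/

theorem Odd.dvd_choose_two {N : ℕ} (hN : Odd N) : N ∣ N.choose 2 := by
  obtain ⟨k, rfl⟩ := hN
  refine ⟨k, ?_⟩
  rw [Nat.choose_two_right, Nat.add_sub_cancel,
    show (2 * k + 1) * (2 * k) = (2 * k + 1) * k * 2 by ring, Nat.mul_div_cancel _ two_pos]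

namespace CubeRelation

variable {G A : Type*} [AddCommGroup G] [AddCommGroup A] {f : G → A}
  (hf : ∀ x y z : G, f (x + y + z) - f (x + y) - f (x + z) - f (y + z) + f x + f y + f z = 0)
include hf

theorem map_zero : f 0 = 0 := by
  simpa using hf 0 0 0

theorem map_succ_nsmul_sub_map_nsmul (x : G) (m : ℕ) :
    f ((m + 1) • x) - f (m • x) = (m + 1) • f x + m • f (-x) := by
  induction m with
  | zero => simp [map_zero hf]
  | succ k ih =>
    have h := hf ((k + 1) • x) x (-x)
    rw [add_neg_cancel_right, add_neg_cancel, map_zero hf, ← succ_nsmul,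
      show (k + 1) • x + -x = k • x by rw [succ_nsmul, add_neg_cancel_right]] at h
    linear_combination (norm := skip) ih - h
    simp only [add_smul, one_smul]
    abel

theorem map_nsmul (x : G) (m : ℕ) :
    f (m • x) = (m + 1).choose 2 • f x + m.choose 2 • f (-x) := by
  induction m with
  | zero => simp [map_zero hf]
  | succ k ih =>
    rw [← sub_add_cancel (f ((k + 1) • x)) (f (k • x)), map_succ_nsmul_sub_map_nsmul hf, ih,
      Nat.choose_succ_succ' (k + 1), Nat.choose_succ_succ' k, Nat.choose_one_right,
      Nat.choose_one_right]
    generalize (k + 1).choose 2 = a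
    generalize k.choose 2 = b
    simp only [add_smul]
    abel

theorem map_nsmul_eq_zero_of_odd {N : ℕ} (hN : Odd N) {x : G} (hx : N • f x = 0)
    (hx' : N • f (-x) = 0) : f (N • x) = 0 := by
  obtain ⟨a, ha⟩ := hN.dvd_choose_two
  obtain ⟨b, hb⟩ : N ∣ (N + 1).choose 2 := by
    rw [Nat.choose_succ_succ', Nat.choose_one_right]
    exact dvd_add dvd_rfl hN.dvd_choose_two
  rw [map_nsmul hf, ha, hb, mul_comm N, mul_comm N, mul_smul, mul_smul, hx, hx', smul_zero,
    smul_zero, add_zero]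

end CubeRelation

theorem cube_relation_odd_prime_torsion_general {G A : Type*} [AddCommGroup G] [AddCommGroup A]
    (f : G → A)
    (hf : ∀ x y z : G,
      f (x + y + z) - f (x + y) - f (x + z) - f (y + z) + f x + f y + f z = 0)
    (ℓ n : ℕ) (hℓ : ℓ.Prime) (hℓ2 : ℓ ≠ 2) (x : G)
    (hx : ℓ ^ n • f x = 0) (hx' : ℓ ^ n • f (-x) = 0) :
    f (ℓ ^ n • x) = 0 :=
  CubeRelation.map_nsmul_eq_zero_of_odd hf ((hℓ.odd_of_ne_two hℓ2).pow) hx hx'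

/-- If `f : G → A` satisfies the cube relation, `ℓ` is an odd prime, `n ≥ 1`,
and `ℓⁿ • f x = 0` and `ℓⁿ • f (-x) = 0`, then `f (ℓⁿ • x) = 0`. -/
theorem cube_relation_odd_prime_torsion {G A : Type*} [AddCommGroup G] [AddCommGroup A]
    (f : G → A)
    (hf : ∀ x y z : G,
      f (x + y + z) - f (x + y) - f (x + z) - f (y + z) + f x + f y + f z = 0)
    (ℓ n : ℕ) (hℓ : ℓ.Prime) (hℓ2 : ℓ ≠ 2) (hn : 1 ≤ n) (x : G)
    (hx : ℓ ^ n • f x = 0) (hx' : ℓ ^ n • f (-x) = 0) :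
    f (ℓ ^ n • x) = 0 :=
  cube_relation_odd_prime_torsion_general f hf ℓ n hℓ hℓ2 x hx hx'
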